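/- Let q : ℝ⁵ → ℝ be twice continuously differentiable and Ψ : ℝ⁵ → ℝ be three times continuously differentiable, satisfying pointwise on ℝ⁵: Δq + f(q) = 0 and ΔΨ + f′(q)Ψ = 0. Fix i ∈ {1, …, 5} and for a differentiable function h define (Λ_i h)(x) = −3 x_i h(x) + |x|² ∂_{x_i}h(x) − 2 x_i (x · ∇h(x)). Then, pointwise on ℝ⁵: −Δ(Λ_i Ψ) − f′(q) · (Λ_i Ψ) = f″(q) · Ψ · (Λ_i q). -/

import Mathlib

/-- The partial derivative `∂_{x_i} F` of a function `F : ℝ⁵ → ℝ`. -/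
noncomputable def pd (i : Fin 5) (F : EuclideanSpace ℝ (Fin 5) → ℝ)
    (x : EuclideanSpace ℝ (Fin 5)) : ℝ :=
  fderiv ℝ F x (EuclideanSpace.single i 1)

/-- The nonlinearity `f(u) = |u|^{4/3} u`. -/
noncomputable def fnl (u : ℝ) : ℝ := |u| ^ ((4 : ℝ) / 3) * u

/-- `f'(u) = (7/3) |u|^{4/3}`. -/
noncomputable def fnl' (u : ℝ) : ℝ := (7 / 3) * |u| ^ ((4 : ℝ) / 3)

/-- `f''(u) = (28/9) sgn(u) |u|^{1/3}` (with `f''(0) = 0`). -/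
noncomputable def fnl'' (u : ℝ) : ℝ := (28 / 9) * Real.sign u * |u| ^ ((1 : ℝ) / 3)

abbrev E5 := EuclideanSpace ℝ (Fin 5)

lemma pd_contDiff {n : ℕ} {F : E5 → ℝ} (hF : ContDiff ℝ (n+1 : ℕ) F) (j : Fin 5) :
    ContDiff ℝ n (pd j F) := by
  have h1 : ContDiff ℝ n (fderiv ℝ F) := hF.fderiv_right (by norm_cast)
  exact (ContinuousLinearMap.apply ℝ ℝ (EuclideanSpace.single j 1)).contDiff.comp h1

lemma pd_congr {F G : E5 → ℝ} (h : ∀ y, F y = G y) (j : Fin 5) (x : E5) :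
    pd j F x = pd j G x := by
  have : F = G := funext h
  rw [this]

lemma pd_add {F G : E5 → ℝ} {x : E5} (hF : DifferentiableAt ℝ F x)
    (hG : DifferentiableAt ℝ G x) (j : Fin 5) :
    pd j (fun y => F y + G y) x = pd j F x + pd j G x := by
  unfold pd; rw [fderiv_fun_add hF hG]; rfl

lemma pd_sub {F G : E5 → ℝ} {x : E5} (hF : DifferentiableAt ℝ F x)
    (hG : DifferentiableAt ℝ G x) (j : Fin 5) :
    pd j (fun y => F y - G y) x = pd j F x - pd j G x := by
  unfold pd; rw [fderiv_fun_sub hF hG]; rfl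

lemma pd_neg {F : E5 → ℝ} {x : E5} (j : Fin 5) :
    pd j (fun y => -(F y)) x = -(pd j F x) := by
  unfold pd; rw [fderiv_fun_neg]; rfl

lemma pd_mul {F G : E5 → ℝ} {x : E5} (hF : DifferentiableAt ℝ F x)
    (hG : DifferentiableAt ℝ G x) (j : Fin 5) :
    pd j (fun y => F y * G y) x = pd j F x * G x + F x * pd j G x := by
  unfold pd; rw [fderiv_fun_mul hF hG]
  simp [ContinuousLinearMap.add_apply, ContinuousLinearMap.smul_apply]
  ring

lemma pd_const_mul {F : E5 → ℝ} {x : E5} (hF : DifferentiableAt ℝ F x) (c : ℝ) (j : Fin 5) :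
    pd j (fun y => c * F y) x = c * pd j F x := by
  unfold pd; rw [fderiv_const_mul hF]; rfl

lemma pd_const (c : ℝ) (j : Fin 5) (x : E5) : pd j (fun _ => c) x = 0 := by
  unfold pd; rw [fderiv_fun_const]; rfl

lemma pd_sum {F : Fin 5 → E5 → ℝ} {x : E5} (hF : ∀ k, DifferentiableAt ℝ (F k) x) (j : Fin 5) :
    pd j (fun y => ∑ k, F k y) x = ∑ k, pd j (F k) x := by
  unfold pd; rw [fderiv_fun_sum (fun k _ => hF k)]
  simp

lemma pd_coord (k j : Fin 5) (x : E5) :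
    pd j (fun y => y k) x = if j = k then 1 else 0 := by
  unfold pd
  have : (fun y : E5 => y k) = (EuclideanSpace.proj (𝕜 := ℝ) k) := rfl
  rw [this, ContinuousLinearMap.fderiv]
  simp [EuclideanSpace.single_apply, eq_comm]

lemma pd_comp {g : ℝ → ℝ} {g' : ℝ} {F : E5 → ℝ} {x : E5}
    (hg : HasDerivAt g g' (F x)) (hF : DifferentiableAt ℝ F x) (j : Fin 5) :
    pd j (fun y => g (F y)) x = g' * pd j F x := by
  unfold pd
  have h := (hg.comp_hasFDerivAt x hF.hasFDerivAt).fderiv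
  have : (fun y => g (F y)) = g ∘ F := rfl
  rw [this, h]; simp

lemma diff_coord (k : Fin 5) : Differentiable ℝ (fun y : E5 => y k) :=
  (EuclideanSpace.proj (𝕜 := ℝ) k).differentiable

lemma diffAt_coord (k : Fin 5) (x : E5) : DifferentiableAt ℝ (fun y : E5 => y k) x :=
  (diff_coord k).differentiableAt

attribute [fun_prop] diffAt_coord

lemma pd_pd_repr {F : E5 → ℝ} (hF : ContDiff ℝ 2 F) (a b : Fin 5) (x : E5) :
    pd a (pd b F) x =
      fderiv ℝ (fderiv ℝ F) x (EuclideanSpace.single a 1) (EuclideanSpace.single b 1) := by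
  have hdf : DifferentiableAt ℝ (fderiv ℝ F) x := by
    have : ContDiff ℝ 1 (fderiv ℝ F) := hF.fderiv_right (by norm_num)
    exact (this.differentiable (by norm_num)).differentiableAt
  have hu : DifferentiableAt ℝ (fun _ : E5 => (EuclideanSpace.single b 1 : E5)) x :=
    differentiableAt_const _
  unfold pd
  rw [fderiv_clm_apply hdf hu]
  simp

lemma pd_comm {F : E5 → ℝ} (hF : ContDiff ℝ 2 F) (a b : Fin 5) (x : E5) :
    pd a (pd b F) x = pd b (pd a F) x := by
  rw [pd_pd_repr hF, pd_pd_repr hF]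
  exact (hF.contDiffAt.isSymmSndFDerivAt (by norm_num)) _ _

lemma hasDerivAt_rpow43 (u : ℝ) :
    HasDerivAt (fun v : ℝ => |v| ^ ((4:ℝ)/3)) ((4/3) * Real.sign u * |u| ^ ((1:ℝ)/3)) u := by
  rcases lt_trichotomy u 0 with hu | rfl | hu
  · have h0 : HasDerivAt (fun v : ℝ => (-v) ^ ((4:ℝ)/3))
        (((4:ℝ)/3 * (-u) ^ ((4:ℝ)/3 - 1)) * (-1)) u := by
      have h := (Real.hasDerivAt_rpow_const (x := -u) (p := (4:ℝ)/3)
        (Or.inl (by linarith))).comp u (hasDerivAt_neg u)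
      exact h
    have heq : (fun v : ℝ => |v| ^ ((4:ℝ)/3)) =ᶠ[nhds u] (fun v : ℝ => (-v) ^ ((4:ℝ)/3)) := by
      filter_upwards [Iio_mem_nhds hu] with v hv
      rw [abs_of_neg hv]
    have := h0.congr_of_eventuallyEq heq
    refine this.congr_deriv ?_
    rw [Real.sign_of_neg hu, abs_of_neg hu]
    norm_num
  · have hs : HasDerivAt (fun v : ℝ => |v| ^ ((4:ℝ)/3)) 0 0 := by
      rw [hasDerivAt_iff_tendsto_slope]
      apply squeeze_zero_norm' (a := fun v : ℝ => |v| ^ ((1:ℝ)/3))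
      · filter_upwards [self_mem_nhdsWithin] with v hv
        have hv' : v ≠ 0 := hv
        have habs : (0:ℝ) < |v| := abs_pos.mpr hv'
        have : slope (fun v : ℝ => |v| ^ ((4:ℝ)/3)) 0 v = |v| ^ ((4:ℝ)/3) / v := by
          simp [slope_def_field, Real.zero_rpow (by norm_num : ((4:ℝ)/3) ≠ 0)]
        rw [this]
        rw [show ((4:ℝ)/3) = 1 + 1/3 by norm_num, Real.rpow_add habs, Real.rpow_one]
        rw [norm_div, Real.norm_eq_abs, Real.norm_eq_abs, abs_mul, abs_abs,
          abs_of_nonneg (Real.rpow_nonneg (abs_nonneg v) _)]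
        field_simp
        exact le_rfl
      · have hc : ContinuousAt (fun v : ℝ => |v| ^ ((1:ℝ)/3)) 0 := by
          exact (Real.continuousAt_rpow_const _ _ (Or.inr (by norm_num))).comp
            continuous_abs.continuousAt
        have := hc.tendsto
        simp only [abs_zero, Real.zero_rpow (by norm_num : ((1:ℝ)/3) ≠ 0)] at this
        exact this.mono_left nhdsWithin_le_nhds
    simpa [Real.sign_zero] using hs
  · have h0 : HasDerivAt (fun v : ℝ => v ^ ((4:ℝ)/3)) ((4:ℝ)/3 * u ^ ((4:ℝ)/3 - 1)) u :=
      Real.hasDerivAt_rpow_const (Or.inl (by linarith))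
    have heq : (fun v : ℝ => |v| ^ ((4:ℝ)/3)) =ᶠ[nhds u] (fun v : ℝ => v ^ ((4:ℝ)/3)) := by
      filter_upwards [Ioi_mem_nhds hu] with v hv
      rw [abs_of_pos hv]
    have := h0.congr_of_eventuallyEq heq
    refine this.congr_deriv ?_
    rw [Real.sign_of_pos hu, abs_of_pos hu]
    norm_num

lemma hasDerivAt_fnl' (u : ℝ) : HasDerivAt fnl' (fnl'' u) u := by
  have h := (hasDerivAt_rpow43 u).const_mul (7/3 : ℝ)
  refine h.congr_deriv ?_
  unfold fnl''; ring

lemma key_id (u : ℝ) : 3 * u * fnl'' u = 4 * fnl' u := by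
  unfold fnl' fnl''
  rcases lt_trichotomy u 0 with hu | rfl | hu
  · rw [Real.sign_of_neg hu, abs_of_neg hu,
      show ((4:ℝ)/3) = 1 + 1/3 by norm_num, Real.rpow_add (by linarith), Real.rpow_one]
    ring
  · simp [Real.zero_rpow (by norm_num : ((4:ℝ)/3) ≠ 0)]
  · rw [Real.sign_of_pos hu, abs_of_pos hu,
      show ((4:ℝ)/3) = 1 + 1/3 by norm_num, Real.rpow_add hu, Real.rpow_one]
    ring

lemma normsq (x : E5) : ‖x‖^2 = ∑ k, x k * x k := by
  rw [EuclideanSpace.norm_eq, Real.sq_sqrt (by positivity)]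
  simp [Real.norm_eq_abs, sq_abs, sq]

theorem stmt_14 (q Ψ : EuclideanSpace ℝ (Fin 5) → ℝ)
    (hq : ContDiff ℝ 2 q) (hΨ : ContDiff ℝ 3 Ψ)
    (heqq : ∀ x, (∑ j, pd j (pd j q) x) + fnl (q x) = 0)
    (heqΨ : ∀ x, (∑ j, pd j (pd j Ψ) x) + fnl' (q x) * Ψ x = 0)
    (i : Fin 5)
    (LΨ : EuclideanSpace ℝ (Fin 5) → ℝ)
    (hLΨ : ∀ x, LΨ x = -3 * x i * Ψ x + ‖x‖ ^ 2 * pd i Ψ x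
        - 2 * x i * (∑ j, x j * pd j Ψ x)) :
    ∀ x, -(∑ j, pd j (pd j LΨ) x) - fnl' (q x) * LΨ x
      = fnl'' (q x) * Ψ x *
        (-3 * x i * q x + ‖x‖ ^ 2 * pd i q x - 2 * x i * (∑ j, x j * pd j q x)) := by
  -- replace LΨ by its explicit formula
  have hLfe : LΨ = fun y => -3 * y i * Ψ y + (∑ k, y k * y k) * pd i Ψ y
      - 2 * y i * (∑ k, y k * pd k Ψ y) := funext fun y => by rw [hLΨ y, normsq]
  subst hLfe
  -- differentiability bookkeeping
  have hΨd : Differentiable ℝ Ψ := hΨ.differentiable (by norm_num)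
  have hΨ3 : ContDiff ℝ ((2:ℕ)+1 : ℕ) Ψ := by exact_mod_cast hΨ
  have hΨ1 : ∀ k, Differentiable ℝ (pd k Ψ) := fun k =>
    (pd_contDiff hΨ3 k).differentiable (by norm_num)
  have hΨ2' : ∀ b, ContDiff ℝ ((1:ℕ)+1 : ℕ) (pd b Ψ) := fun b => by
    have := pd_contDiff hΨ3 b; exact_mod_cast this
  have hΨ2 : ∀ a b, Differentiable ℝ (pd a (pd b Ψ)) := fun a b =>
    (pd_contDiff (hΨ2' b) a).differentiable (by norm_num)
  have hΨc2 : ContDiff ℝ 2 Ψ := hΨ.of_le (by norm_num)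
  have hΨc2' : ∀ b, ContDiff ℝ 2 (pd b Ψ) := fun b => by
    have := hΨ2' b; exact_mod_cast this
  have hqd : Differentiable ℝ q := hq.differentiable (by norm_num)
  have hfqAt : ∀ y, DifferentiableAt ℝ (fun z => fnl' (q z)) y := fun y =>
    ((hasDerivAt_fnl' (q y)).comp_hasFDerivAt y (hqd y).hasFDerivAt).differentiableAt
  -- first derivative of LΨ
  have hstep1 : ∀ (j : Fin 5) (y : E5),
      pd j (fun z => -3 * z i * Ψ z + (∑ k, z k * z k) * pd i Ψ z
        - 2 * z i * (∑ k, z k * pd k Ψ z)) y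
      = -3 * (if j = i then (1:ℝ) else 0) * Ψ y - 3 * y i * pd j Ψ y
        + (2 * y j * pd i Ψ y + (∑ k, y k * y k) * pd j (pd i Ψ) y)
        - 2 * (if j = i then (1:ℝ) else 0) * (∑ k, y k * pd k Ψ y)
        - 2 * y i * (pd j Ψ y + ∑ k, y k * pd j (pd k Ψ) y) := by
    intro j y
    simp (disch := fun_prop) only [pd_sub, pd_add, pd_mul, pd_const_mul, pd_sum, pd_coord,
      pd_neg, pd_const]
    simp only [ite_mul, mul_ite, one_mul, zero_mul, mul_one, mul_zero,
      Finset.sum_add_distrib, Finset.sum_ite_eq, Finset.mem_univ, if_true]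
    split_ifs <;> ring
  intro x
  -- second derivative of LΨ
  have hstep2 : ∀ (j : Fin 5),
      pd j (pd j (fun z => -3 * z i * Ψ z + (∑ k, z k * z k) * pd i Ψ z
        - 2 * z i * (∑ k, z k * pd k Ψ z))) x
      = -6 * (if j = i then (1:ℝ) else 0) * pd j Ψ x - 3 * x i * pd j (pd j Ψ) x
        + 2 * pd i Ψ x + 4 * (x j * pd j (pd i Ψ) x)
        + (∑ k, x k * x k) * pd j (pd j (pd i Ψ)) x
        - 4 * (if j = i then (1:ℝ) else 0) * (pd j Ψ x + ∑ k, x k * pd j (pd k Ψ) x)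
        - 2 * x i * (2 * pd j (pd j Ψ) x + ∑ k, x k * pd j (pd j (pd k Ψ)) x) := by
    intro j
    rw [pd_congr (hstep1 j) j x]
    simp (disch := fun_prop) only [pd_sub, pd_add, pd_mul, pd_const_mul, pd_sum, pd_coord,
      pd_neg, pd_const]
    simp only [ite_mul, mul_ite, one_mul, zero_mul, mul_one, mul_zero,
      Finset.sum_add_distrib, Finset.sum_ite_eq, Finset.mem_univ, if_true]
    split_ifs <;> ring
  -- sum over j, collapsing the Kronecker deltas
  have hsum : (∑ j, pd j (pd j (fun z => -3 * z i * Ψ z + (∑ k, z k * z k) * pd i Ψ z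
        - 2 * z i * (∑ k, z k * pd k Ψ z))) x)
      = -7 * x i * (∑ j, pd j (pd j Ψ) x)
        + 4 * (∑ j, x j * pd j (pd i Ψ) x)
        - 4 * (∑ j, x j * pd i (pd j Ψ) x)
        + (∑ k, x k * x k) * (∑ j, pd j (pd j (pd i Ψ)) x)
        - 2 * x i * (∑ k, x k * (∑ j, pd j (pd j (pd k Ψ)) x)) := by
    rw [Finset.sum_congr rfl (fun j _ => hstep2 j)]
    have hRj : ∀ j : Fin 5,
        (-6 * (if j = i then (1:ℝ) else 0) * pd j Ψ x - 3 * x i * pd j (pd j Ψ) x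
          + 2 * pd i Ψ x + 4 * (x j * pd j (pd i Ψ) x)
          + (∑ k, x k * x k) * pd j (pd j (pd i Ψ)) x
          - 4 * (if j = i then (1:ℝ) else 0) * (pd j Ψ x + ∑ k, x k * pd j (pd k Ψ) x)
          - 2 * x i * (2 * pd j (pd j Ψ) x + ∑ k, x k * pd j (pd j (pd k Ψ)) x))
        = ((if j = i then (-10 * pd i Ψ x - 4 * (∑ k, x k * pd i (pd k Ψ) x)) else 0)
            + 2 * pd i Ψ x + 4 * (x j * pd i (pd j Ψ) x))
          + (-7 * x i * pd j (pd j Ψ) x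
            + 4 * (x j * pd j (pd i Ψ) x)
            - 4 * (x j * pd i (pd j Ψ) x)
            + (∑ k, x k * x k) * pd j (pd j (pd i Ψ)) x
            - 2 * x i * (∑ k, x k * pd j (pd j (pd k Ψ)) x)) := by
      intro j
      split_ifs with h
      · subst h; ring
      · ring
    rw [Finset.sum_congr rfl (fun j _ => hRj j)]
    rw [Finset.sum_add_distrib]
    have hzero : (∑ j : Fin 5, ((if j = i then (-10 * pd i Ψ x
          - 4 * (∑ k, x k * pd i (pd k Ψ) x)) else 0)
        + 2 * pd i Ψ x + 4 * (x j * pd i (pd j Ψ) x))) = 0 := by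
      simp only [Finset.sum_add_distrib, Finset.sum_ite_eq', Finset.mem_univ, if_true,
        Finset.sum_const, Finset.card_univ, Fintype.card_fin, nsmul_eq_mul,
        ← Finset.mul_sum]
      ring
    rw [hzero, zero_add]
    simp only [Finset.sum_sub_distrib, Finset.sum_add_distrib, ← Finset.mul_sum]
    rw [Finset.sum_comm (γ := Fin 5) (f := fun j k => x k * pd j (pd j (pd k Ψ)) x)]
    simp only [← Finset.mul_sum]
  -- the Laplacian of Ψ pointwise
  have hDfun : ∀ y, (∑ j, pd j (pd j Ψ) y) = -(fnl' (q y) * Ψ y) := fun y => by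
    have := heqΨ y; linarith
  -- third-derivative identity: Laplacian commutes with pd k
  have fact3 : ∀ k : Fin 5, (∑ j, pd j (pd j (pd k Ψ)) x)
      = -(fnl'' (q x) * pd k q x * Ψ x + fnl' (q x) * pd k Ψ x) := by
    intro k
    have hswap : ∀ j : Fin 5, pd j (pd j (pd k Ψ)) x = pd k (pd j (pd j Ψ)) x := by
      intro j
      have h1 : pd j (pd k Ψ) = pd k (pd j Ψ) := funext fun y => pd_comm hΨc2 j k y
      rw [h1]
      exact pd_comm (hΨc2' j) j k x
    rw [Finset.sum_congr rfl (fun j _ => hswap j)]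
    rw [← pd_sum (fun j => (hΨ2 j j).differentiableAt) k]
    rw [pd_congr hDfun k x, pd_neg k]
    rw [pd_mul (hfqAt x) (hΨd x) k,
      pd_comp (hasDerivAt_fnl' (q x)) (hqd x) k]
  -- symmetry of second derivatives
  have hUV : (∑ j, x j * pd j (pd i Ψ) x) = ∑ j, x j * pd i (pd j Ψ) x :=
    Finset.sum_congr rfl fun j _ => by rw [pd_comm hΨc2 j i x]
  -- the weighted sum of third derivatives
  have hT : (∑ k, x k * (∑ j, pd j (pd j (pd k Ψ)) x))
      = -(fnl'' (q x) * Ψ x * (∑ k, x k * pd k q x)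
          + fnl' (q x) * (∑ k, x k * pd k Ψ x)) := by
    have : ∀ k : Fin 5, x k * (∑ j, pd j (pd j (pd k Ψ)) x)
        = (-(fnl'' (q x) * Ψ x)) * (x k * pd k q x) + (-(fnl' (q x))) * (x k * pd k Ψ x) := by
      intro k; rw [fact3 k]; ring
    rw [Finset.sum_congr rfl (fun k _ => this k), Finset.sum_add_distrib,
      ← Finset.mul_sum, ← Finset.mul_sum]
    ring
  rw [hsum, hUV, hDfun x, fact3 i, hT, normsq]
  show -(_) - fnl' (q x) * (-3 * x i * Ψ x + (∑ k, x k * x k) * pd i Ψ x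
      - 2 * x i * (∑ k, x k * pd k Ψ x)) = _
  linear_combination (x i * Ψ x) * key_id (q x)
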